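/- Exactly twenty-three different scenarios can be identified: the set of index pairs (l1, l2) ∈ {1,…,5}² for which there exist positive real parameters SNR1, SNR2, INR12, INR21 such that the events S(l1,1) and S(l2,2) hold simultaneously is exactly {1,…,5}² \ {(2,2), (3,3)}, a set of cardinality 23. -/
import Mathlib


noncomputable section

/-- Base-2 logarithm. -/
def log2 (x : ℝ) : ℝ := Real.logb 2 x

/-- Parameters of the two-user Gaussian interference channel with
noisy channel-output feedback (G-IC-NOF). -/
structure GIC where
  snr1 : ℝ
  snr2 : ℝ
  inr12 : ℝ
  inr21 : ℝ
  bsnr1 : ℝ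
  bsnr2 : ℝ

namespace GIC

variable (p : GIC)

/-- Positivity of all channel parameters. -/
def pos : Prop :=
  0 < p.snr1 ∧ 0 < p.snr2 ∧ 0 < p.inr12 ∧ 0 < p.inr21 ∧ 0 < p.bsnr1 ∧ 0 < p.bsnr2

/-- Forward signal-to-noise ratio of pair `i`. -/
def SNR (i : ℕ) : ℝ := if i = 1 then p.snr1 else p.snr2

/-- `INR_{ij}` for pair `i` (with `j = 3 - i`). -/
def INRij (i : ℕ) : ℝ := if i = 1 then p.inr12 else p.inr21

/-- `INR_{ji}` for pair `i` (with `j = 3 - i`). -/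
def INRji (i : ℕ) : ℝ := if i = 1 then p.inr21 else p.inr12

/-- Feedback signal-to-noise ratio of pair `i`. -/
def bSNR (i : ℕ) : ℝ := if i = 1 then p.bsnr1 else p.bsnr2

/-- `b_{1,i}(ρ)`. -/
def b1 (i : ℕ) (ρ : ℝ) : ℝ :=
  p.SNR i + 2 * ρ * Real.sqrt (p.SNR i * p.INRij i) + p.INRij i

/-- `b_{2,i}(ρ)`. -/
def b2 (i : ℕ) (ρ : ℝ) : ℝ := (1 - ρ) * p.INRij i - 1

/-- `b_{3,i}`. -/
def b3 (i : ℕ) : ℝ := p.SNR i - 2 * Real.sqrt (p.SNR i * p.INRji i) + p.INRji i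

/-- `b_{4,i}(ρ)`. -/
def b4 (i : ℕ) (ρ : ℝ) : ℝ := (1 - ρ ^ 2) * p.SNR i

/-- `b_{5,i}(ρ)`. -/
def b5 (i : ℕ) (ρ : ℝ) : ℝ := (1 - ρ ^ 2) * p.INRij i

/-- `b_{6,i}(ρ)`. -/
def b6 (i : ℕ) (ρ : ℝ) : ℝ :=
  p.SNR i + p.INRij i
    + 2 * ρ * Real.sqrt (p.INRij i) * (Real.sqrt (p.SNR i) - Real.sqrt (p.INRji i))
    + (p.INRij i * Real.sqrt (p.INRji i) / p.SNR i)
      * (Real.sqrt (p.INRji i) - 2 * Real.sqrt (p.SNR i))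

/-- `a_{1,i}`. -/
def a1 (i : ℕ) : ℝ := 1 / 2 * log2 (2 + p.SNR i / p.INRji i) - 1 / 2

/-- `a_{2,i}(ρ)`. -/
def a2 (i : ℕ) (ρ : ℝ) : ℝ := 1 / 2 * log2 (p.b1 i ρ + 1) - 1 / 2

/-- `a_{3,i}(ρ, μ)`. -/
def a3 (i : ℕ) (ρ μ : ℝ) : ℝ :=
  1 / 2 * log2 ((p.bSNR i * (p.b2 i ρ + 2) + p.b1 i 1 + 1)
      / (p.bSNR i * ((1 - μ) * p.b2 i ρ + 2) + p.b1 i 1 + 1))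

/-- `a_{4,i}(ρ, μ)`. -/
def a4 (i : ℕ) (ρ μ : ℝ) : ℝ := 1 / 2 * log2 ((1 - μ) * p.b2 i ρ + 2) - 1 / 2

/-- `a_{5,i}(ρ, μ)`. -/
def a5 (i : ℕ) (ρ μ : ℝ) : ℝ :=
  1 / 2 * log2 (2 + p.SNR i / p.INRji i + (1 - μ) * p.b2 i ρ) - 1 / 2

/-- `a_{6,i}(ρ, μ)`. -/
def a6 (i : ℕ) (ρ μ : ℝ) : ℝ :=
  1 / 2 * log2 (p.SNR i / p.INRji i * ((1 - μ) * p.b2 (3 - i) ρ + 1) + 2) - 1 / 2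

/-- `a_{7,i}(ρ, μ₁, μ₂)`. -/
def a7 (i : ℕ) (ρ μ1 μ2 : ℝ) : ℝ :=
  let μi := if i = 1 then μ1 else μ2
  let μj := if i = 1 then μ2 else μ1
  1 / 2 * log2 (p.SNR i / p.INRji i * ((1 - μi) * p.b2 (3 - i) ρ + 1)
      + (1 - μj) * p.b2 i ρ + 2) - 1 / 2

/-- The event `S_{l,i}` for `l ∈ {1,…,5}` and `i ∈ {1,2}` (with `j = 3 - i`). -/
def S (l i : ℕ) : Prop :=
  match l with
  | 1 => p.SNR (3 - i) < min (p.INRij i) (p.INRji i)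
  | 2 => p.INRji i ≤ p.SNR (3 - i) ∧ p.SNR (3 - i) < p.INRij i
  | 3 => p.INRij i ≤ p.SNR (3 - i) ∧ p.SNR (3 - i) < p.INRji i
  | 4 => max (p.INRij i) (p.INRji i) ≤ p.SNR (3 - i) ∧
         p.SNR (3 - i) < p.INRij i * p.INRji i
  | 5 => max (max (p.INRij i) (p.INRji i)) (p.INRij i * p.INRji i) ≤ p.SNR (3 - i)
  | _ => False

/-- `κ_{1,i}(ρ)`. -/
def κ1 (i : ℕ) (ρ : ℝ) : ℝ := 1 / 2 * log2 (p.b1 i ρ + 1)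

/-- `κ_{2,i}(ρ)`. -/
def κ2 (i : ℕ) (ρ : ℝ) : ℝ :=
  1 / 2 * log2 (1 + p.b5 (3 - i) ρ) + 1 / 2 * log2 (1 + p.b4 i ρ / (1 + p.b5 (3 - i) ρ))

/-- `κ_{3,i}(ρ)`. -/
def κ3 (i : ℕ) (ρ : ℝ) : ℝ :=
  1 / 2 * log2 (p.bSNR (3 - i) * (p.b4 i ρ + p.b5 (3 - i) ρ + 1)
      / ((p.b1 (3 - i) 1 + 1) * (p.b4 i ρ + 1)) + 1)
    + 1 / 2 * log2 (p.b4 i ρ + 1)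

/-- `κ_4(ρ)`. -/
def κ4 (ρ : ℝ) : ℝ :=
  1 / 2 * log2 (1 + p.b4 1 ρ / (1 + p.b5 2 ρ)) + 1 / 2 * log2 (p.b1 2 ρ + 1)

/-- `κ_5(ρ)`. -/
def κ5 (ρ : ℝ) : ℝ :=
  1 / 2 * log2 (1 + p.b4 2 ρ / (1 + p.b5 1 ρ)) + 1 / 2 * log2 (p.b1 1 ρ + 1)

/-- `κ_{6,1}(ρ)`. -/
def κ61 (ρ : ℝ) : ℝ :=
  1 / 2 * log2 (p.b1 1 ρ + p.b5 1 ρ * p.inr21) - 1 / 2 * log2 (1 + p.inr12)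
    + 1 / 2 * log2 (1 + p.b5 2 ρ * p.bsnr2 / (p.b1 2 1 + 1))
    + 1 / 2 * log2 (p.b1 2 ρ + p.b5 1 ρ * p.inr21) - 1 / 2 * log2 (1 + p.inr21)
    + 1 / 2 * log2 (1 + p.b5 1 ρ * p.bsnr1 / (p.b1 1 1 + 1))
    + log2 (2 * Real.pi * Real.exp 1)

/-- `κ_{6,2}(ρ)`. -/
def κ62 (ρ : ℝ) : ℝ :=
  1 / 2 * log2 (p.b6 2 ρ + p.b5 1 ρ * p.inr21 / p.snr2 * (p.snr2 + p.b3 2))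
    - 1 / 2 * log2 (1 + p.inr12)
    + 1 / 2 * log2 (1 + p.b5 1 ρ * p.bsnr1 / (p.b1 1 1 + 1))
    + 1 / 2 * log2 (p.b1 1 ρ + p.b5 1 ρ * p.inr21) - 1 / 2 * log2 (1 + p.inr21)
    + 1 / 2 * log2 (1 + p.b5 2 ρ / p.snr2 * (p.inr12 + p.b3 2 * p.bsnr2 / (p.b1 2 1 + 1)))
    - 1 / 2 * log2 (1 + p.b5 1 ρ * p.inr21 / p.snr2)
    + log2 (2 * Real.pi * Real.exp 1)

/-- `κ_{6,3}(ρ)`. -/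
def κ63 (ρ : ℝ) : ℝ :=
  1 / 2 * log2 (p.b6 1 ρ + p.b5 1 ρ * p.inr21 / p.snr1 * (p.snr1 + p.b3 1))
    - 1 / 2 * log2 (1 + p.inr12)
    + 1 / 2 * log2 (1 + p.b5 2 ρ * p.bsnr2 / (p.b1 2 1 + 1))
    + 1 / 2 * log2 (p.b1 2 ρ + p.b5 1 ρ * p.inr21) - 1 / 2 * log2 (1 + p.inr21)
    + 1 / 2 * log2 (1 + p.b5 1 ρ / p.snr1 * (p.inr21 + p.b3 1 * p.bsnr1 / (p.b1 1 1 + 1)))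
    - 1 / 2 * log2 (1 + p.b5 1 ρ * p.inr21 / p.snr1)
    + log2 (2 * Real.pi * Real.exp 1)

/-- `κ_{6,4}(ρ)`. -/
def κ64 (ρ : ℝ) : ℝ :=
  1 / 2 * log2 (p.b6 1 ρ + p.b5 1 ρ * p.inr21 / p.snr1 * (p.snr1 + p.b3 1))
    - 1 / 2 * log2 (1 + p.inr12) - 1 / 2 * log2 (1 + p.inr21)
    + 1 / 2 * log2 (1 + p.b5 2 ρ / p.snr2 * (p.inr12 + p.b3 2 * p.bsnr2 / (p.b1 2 1 + 1)))
    - 1 / 2 * log2 (1 + p.b5 1 ρ * p.inr21 / p.snr2)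
    - 1 / 2 * log2 (1 + p.b5 1 ρ * p.inr21 / p.snr1)
    + 1 / 2 * log2 (p.b6 2 ρ + p.b5 1 ρ * p.inr21 / p.snr2 * (p.snr2 + p.b3 2))
    + 1 / 2 * log2 (1 + p.b5 1 ρ / p.snr1 * (p.inr21 + p.b3 1 * p.bsnr1 / (p.b1 1 1 + 1)))
    + log2 (2 * Real.pi * Real.exp 1)

open Classical in
/-- `κ_6(ρ)`, defined by cases on the events `S_{l,i}`. -/
def κ6 (ρ : ℝ) : ℝ :=
  if (p.S 1 2 ∨ p.S 2 2 ∨ p.S 5 2) ∧ (p.S 1 1 ∨ p.S 2 1 ∨ p.S 5 1) then p.κ61 ρ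
  else if (p.S 1 2 ∨ p.S 2 2 ∨ p.S 5 2) ∧ (p.S 3 1 ∨ p.S 4 1) then p.κ62 ρ
  else if (p.S 3 2 ∨ p.S 4 2) ∧ (p.S 1 1 ∨ p.S 2 1 ∨ p.S 5 1) then p.κ63 ρ
  else p.κ64 ρ

/-- `κ_{7,i,1}(ρ)`. -/
def κ7i1 (i : ℕ) (ρ : ℝ) : ℝ :=
  1 / 2 * log2 (p.b1 i ρ + 1) - 1 / 2 * log2 (1 + p.INRij i)
    + 1 / 2 * log2 (1 + p.b5 (3 - i) ρ * p.bSNR (3 - i) / (p.b1 (3 - i) 1 + 1))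
    + 1 / 2 * log2 (p.b1 (3 - i) ρ + p.b5 i ρ * p.INRji i)
    + 1 / 2 * log2 (1 + p.b4 i ρ + p.b5 (3 - i) ρ) - 1 / 2 * log2 (1 + p.b5 (3 - i) ρ)
    + 2 * log2 (2 * Real.pi * Real.exp 1)

/-- `κ_{7,i,2}(ρ)`. -/
def κ7i2 (i : ℕ) (ρ : ℝ) : ℝ :=
  1 / 2 * log2 (p.b1 i ρ + 1) - 1 / 2 * log2 (1 + p.INRij i)
    - 1 / 2 * log2 (1 + p.b5 (3 - i) ρ)
    + 1 / 2 * log2 (1 + p.b4 i ρ + p.b5 (3 - i) ρ)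
    + 1 / 2 * log2 (1 + (1 - ρ ^ 2) * (p.INRji i / p.SNR (3 - i))
        * (p.INRij i + p.b3 (3 - i) * p.bSNR (3 - i) / (p.b1 (3 - i) 1 + 1)))
    - 1 / 2 * log2 (1 + p.b5 i ρ * p.INRji i / p.SNR (3 - i))
    + 1 / 2 * log2 (p.b6 (3 - i) ρ
        + p.b5 i ρ * p.INRji i / p.SNR (3 - i) * (p.SNR (3 - i) + p.b3 (3 - i)))
    + 2 * log2 (2 * Real.pi * Real.exp 1)

open Classical in
/-- `κ_{7,i}(ρ)`, defined by cases on the events `S_{l,i}`. -/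
def κ7 (i : ℕ) (ρ : ℝ) : ℝ :=
  if p.S 1 i ∨ p.S 2 i ∨ p.S 5 i then p.κ7i1 i ρ else p.κ7i2 i ρ

/-- The achievable region `C_low` (Theorem 1). -/
def Clow : Set (ℝ × ℝ) :=
  closure {R : ℝ × ℝ | 0 ≤ R.1 ∧ 0 ≤ R.2 ∧
    ∃ ρ ∈ Set.Icc (0 : ℝ) (max (1 - max (1 / p.inr12) (1 / p.inr21)) 0),
    ∃ μ1 ∈ Set.Icc (0 : ℝ) 1, ∃ μ2 ∈ Set.Icc (0 : ℝ) 1,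
      R.1 ≤ min (p.a2 1 ρ) (min (p.a6 1 ρ μ1 + p.a3 2 ρ μ1)
              (p.a1 1 + p.a3 2 ρ μ1 + p.a4 2 ρ μ1)) ∧
      R.2 ≤ min (p.a2 2 ρ) (min (p.a3 1 ρ μ2 + p.a6 2 ρ μ2)
              (p.a3 1 ρ μ2 + p.a4 1 ρ μ2 + p.a1 2)) ∧
      R.1 + R.2 ≤ min (p.a2 1 ρ + p.a1 2) (min (p.a1 1 + p.a2 2 ρ)
              (min (p.a3 1 ρ μ2 + p.a1 1 + p.a3 2 ρ μ1 + p.a7 2 ρ μ1 μ2)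
              (min (p.a3 1 ρ μ2 + p.a5 1 ρ μ2 + p.a3 2 ρ μ1 + p.a5 2 ρ μ1)
                   (p.a3 1 ρ μ2 + p.a7 1 ρ μ1 μ2 + p.a3 2 ρ μ1 + p.a1 2)))) ∧
      2 * R.1 + R.2 ≤ min (p.a2 1 ρ + p.a1 1 + p.a3 2 ρ μ1 + p.a7 2 ρ μ1 μ2)
              (min (p.a3 1 ρ μ2 + p.a1 1 + p.a7 1 ρ μ1 μ2 + 2 * p.a3 2 ρ μ1 + p.a5 2 ρ μ1)
                   (p.a2 1 ρ + p.a1 1 + p.a3 2 ρ μ1 + p.a5 2 ρ μ1)) ∧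
      R.1 + 2 * R.2 ≤ min (p.a3 1 ρ μ2 + p.a5 1 ρ μ2 + p.a2 2 ρ + p.a1 2)
              (min (p.a3 1 ρ μ2 + p.a7 1 ρ μ1 μ2 + p.a2 2 ρ + p.a1 2)
                   (2 * p.a3 1 ρ μ2 + p.a5 1 ρ μ2 + p.a3 2 ρ μ1 + p.a1 2
                      + p.a7 2 ρ μ1 μ2))}

/-- The converse region `C_up` (Theorem 2). -/
def Cup : Set (ℝ × ℝ) :=
  closure {R : ℝ × ℝ | 0 ≤ R.1 ∧ 0 ≤ R.2 ∧
    ∃ ρ ∈ Set.Icc (0 : ℝ) 1,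
      R.1 ≤ min (p.κ1 1 ρ) (min (p.κ2 1 ρ) (p.κ3 1 ρ)) ∧
      R.2 ≤ min (p.κ1 2 ρ) (min (p.κ2 2 ρ) (p.κ3 2 ρ)) ∧
      R.1 + R.2 ≤ min (p.κ4 ρ) (min (p.κ5 ρ) (p.κ6 ρ)) ∧
      2 * R.1 + R.2 ≤ p.κ7 1 ρ ∧
      R.1 + 2 * R.2 ≤ p.κ7 2 ρ}

end GIC

/-- The set of index pairs `(l₁, l₂) ∈ {1,…,5}²` realizable by some choice of
positive parameters. -/
def feasiblePairs : Set (ℕ × ℕ) :=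
  {q : ℕ × ℕ | q.1 ∈ Set.Icc 1 5 ∧ q.2 ∈ Set.Icc 1 5 ∧
    ∃ p : GIC, (0 < p.snr1 ∧ 0 < p.snr2 ∧ 0 < p.inr12 ∧ 0 < p.inr21) ∧
      p.S q.1 1 ∧ p.S q.2 2}

/-- exactly twenty-three different scenarios can be identified. -/
theorem feasiblePairs_eq_and_card :
    feasiblePairs =
      (Set.Icc 1 5 ×ˢ Set.Icc 1 5) \ {((2 : ℕ), (2 : ℕ)), ((3 : ℕ), (3 : ℕ))} ∧
    feasiblePairs.ncard = 23 := by
  have hset : feasiblePairs =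
    (Set.Icc 1 5 ×ˢ Set.Icc 1 5) \ {((2 : ℕ), (2 : ℕ)), ((3 : ℕ), (3 : ℕ))} := by
    ext ⟨l1, l2⟩
    simp only [feasiblePairs, Set.mem_setOf_eq, Set.mem_diff, Set.mem_prod,
      Set.mem_insert_iff, Set.mem_singleton_iff, Prod.mk.injEq]
    constructor
    · rintro ⟨h1, h2, p, ⟨hs1, hs2, hi12, hi21⟩, hS1, hS2⟩
      refine ⟨⟨h1, h2⟩, ?_⟩
      rintro (⟨rfl, rfl⟩ | ⟨rfl, rfl⟩)
      · simp only [GIC.S, GIC.SNR, GIC.INRij, GIC.INRji] at hS1 hS2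
        norm_num at hS1 hS2
        linarith [hS1.1, hS1.2, hS2.1, hS2.2]
      · simp only [GIC.S, GIC.SNR, GIC.INRij, GIC.INRji] at hS1 hS2
        norm_num at hS1 hS2
        linarith [hS1.1, hS1.2, hS2.1, hS2.2]
    · rintro ⟨⟨h1, h2⟩, hne⟩
      refine ⟨h1, h2, ?_⟩
      rw [Set.mem_Icc] at h1 h2
      obtain ⟨h11, h15⟩ := h1
      obtain ⟨h21, h25⟩ := h2
      interval_cases l1 <;> interval_cases l2
      · exact ⟨⟨1, 1, 8, 2, 1, 1⟩, by norm_num,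
          by norm_num [GIC.S, GIC.SNR, GIC.INRij, GIC.INRji],
          by norm_num [GIC.S, GIC.SNR, GIC.INRij, GIC.INRji]⟩
      · exact ⟨⟨4, 1, 2, 8, 1, 1⟩, by norm_num,
          by norm_num [GIC.S, GIC.SNR, GIC.INRij, GIC.INRji],
          by norm_num [GIC.S, GIC.SNR, GIC.INRij, GIC.INRji]⟩
      · exact ⟨⟨4, 1, 8, 2, 1, 1⟩, by norm_num,
          by norm_num [GIC.S, GIC.SNR, GIC.INRij, GIC.INRji],
          by norm_num [GIC.S, GIC.SNR, GIC.INRij, GIC.INRji]⟩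
      · exact ⟨⟨10, 1, 8, 2, 1, 1⟩, by norm_num,
          by norm_num [GIC.S, GIC.SNR, GIC.INRij, GIC.INRji],
          by norm_num [GIC.S, GIC.SNR, GIC.INRij, GIC.INRji]⟩
      · exact ⟨⟨20, 1, 8, 2, 1, 1⟩, by norm_num,
          by norm_num [GIC.S, GIC.SNR, GIC.INRij, GIC.INRji],
          by norm_num [GIC.S, GIC.SNR, GIC.INRij, GIC.INRji]⟩
      · exact ⟨⟨1, 4, 8, 2, 1, 1⟩, by norm_num,
          by norm_num [GIC.S, GIC.SNR, GIC.INRij, GIC.INRji],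
          by norm_num [GIC.S, GIC.SNR, GIC.INRij, GIC.INRji]⟩
      · exact absurd (Or.inl ⟨rfl, rfl⟩) hne
      · exact ⟨⟨4, 4, 8, 2, 1, 1⟩, by norm_num,
          by norm_num [GIC.S, GIC.SNR, GIC.INRij, GIC.INRji],
          by norm_num [GIC.S, GIC.SNR, GIC.INRij, GIC.INRji]⟩
      · exact ⟨⟨10, 4, 8, 2, 1, 1⟩, by norm_num,
          by norm_num [GIC.S, GIC.SNR, GIC.INRij, GIC.INRji],
          by norm_num [GIC.S, GIC.SNR, GIC.INRij, GIC.INRji]⟩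
      · exact ⟨⟨20, 4, 8, 2, 1, 1⟩, by norm_num,
          by norm_num [GIC.S, GIC.SNR, GIC.INRij, GIC.INRji],
          by norm_num [GIC.S, GIC.SNR, GIC.INRij, GIC.INRji]⟩
      · exact ⟨⟨1, 4, 2, 8, 1, 1⟩, by norm_num,
          by norm_num [GIC.S, GIC.SNR, GIC.INRij, GIC.INRji],
          by norm_num [GIC.S, GIC.SNR, GIC.INRij, GIC.INRji]⟩
      · exact ⟨⟨4, 4, 2, 8, 1, 1⟩, by norm_num,
          by norm_num [GIC.S, GIC.SNR, GIC.INRij, GIC.INRji],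
          by norm_num [GIC.S, GIC.SNR, GIC.INRij, GIC.INRji]⟩
      · exact absurd (Or.inr ⟨rfl, rfl⟩) hne
      · exact ⟨⟨10, 4, 2, 8, 1, 1⟩, by norm_num,
          by norm_num [GIC.S, GIC.SNR, GIC.INRij, GIC.INRji],
          by norm_num [GIC.S, GIC.SNR, GIC.INRij, GIC.INRji]⟩
      · exact ⟨⟨20, 4, 2, 8, 1, 1⟩, by norm_num,
          by norm_num [GIC.S, GIC.SNR, GIC.INRij, GIC.INRji],
          by norm_num [GIC.S, GIC.SNR, GIC.INRij, GIC.INRji]⟩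
      · exact ⟨⟨1, 10, 8, 2, 1, 1⟩, by norm_num,
          by norm_num [GIC.S, GIC.SNR, GIC.INRij, GIC.INRji],
          by norm_num [GIC.S, GIC.SNR, GIC.INRij, GIC.INRji]⟩
      · exact ⟨⟨4, 10, 2, 8, 1, 1⟩, by norm_num,
          by norm_num [GIC.S, GIC.SNR, GIC.INRij, GIC.INRji],
          by norm_num [GIC.S, GIC.SNR, GIC.INRij, GIC.INRji]⟩
      · exact ⟨⟨4, 10, 8, 2, 1, 1⟩, by norm_num,
          by norm_num [GIC.S, GIC.SNR, GIC.INRij, GIC.INRji],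
          by norm_num [GIC.S, GIC.SNR, GIC.INRij, GIC.INRji]⟩
      · exact ⟨⟨10, 10, 8, 2, 1, 1⟩, by norm_num,
          by norm_num [GIC.S, GIC.SNR, GIC.INRij, GIC.INRji],
          by norm_num [GIC.S, GIC.SNR, GIC.INRij, GIC.INRji]⟩
      · exact ⟨⟨20, 10, 8, 2, 1, 1⟩, by norm_num,
          by norm_num [GIC.S, GIC.SNR, GIC.INRij, GIC.INRji],
          by norm_num [GIC.S, GIC.SNR, GIC.INRij, GIC.INRji]⟩
      · exact ⟨⟨1, 20, 8, 2, 1, 1⟩, by norm_num,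
          by norm_num [GIC.S, GIC.SNR, GIC.INRij, GIC.INRji],
          by norm_num [GIC.S, GIC.SNR, GIC.INRij, GIC.INRji]⟩
      · exact ⟨⟨4, 20, 2, 8, 1, 1⟩, by norm_num,
          by norm_num [GIC.S, GIC.SNR, GIC.INRij, GIC.INRji],
          by norm_num [GIC.S, GIC.SNR, GIC.INRij, GIC.INRji]⟩
      · exact ⟨⟨4, 20, 8, 2, 1, 1⟩, by norm_num,
          by norm_num [GIC.S, GIC.SNR, GIC.INRij, GIC.INRji],
          by norm_num [GIC.S, GIC.SNR, GIC.INRij, GIC.INRji]⟩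
      · exact ⟨⟨10, 20, 8, 2, 1, 1⟩, by norm_num,
          by norm_num [GIC.S, GIC.SNR, GIC.INRij, GIC.INRji],
          by norm_num [GIC.S, GIC.SNR, GIC.INRij, GIC.INRji]⟩
      · exact ⟨⟨20, 20, 8, 2, 1, 1⟩, by norm_num,
          by norm_num [GIC.S, GIC.SNR, GIC.INRij, GIC.INRji],
          by norm_num [GIC.S, GIC.SNR, GIC.INRij, GIC.INRji]⟩
  refine ⟨hset, ?_⟩
  rw [hset]
  have hfin : ((Set.Icc 1 5 ×ˢ Set.Icc 1 5 : Set (ℕ × ℕ)) \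
      {((2 : ℕ), (2 : ℕ)), ((3 : ℕ), (3 : ℕ))}) =
      ↑(((Finset.Icc 1 5 ×ˢ Finset.Icc 1 5) \
        {((2 : ℕ), (2 : ℕ)), ((3 : ℕ), (3 : ℕ))} : Finset (ℕ × ℕ))) := by
    ext ⟨a, b⟩
    simp [Finset.mem_Icc, Prod.ext_iff]
  rw [hfin, Set.ncard_coe_finset]
  decide
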